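/- The communication models p2p, causal, and bag are causally-closed: for each of these models Com and every MSC M, if lin_Com(M) ≠ ∅ then lin_Com(M) = lin(M). -/

import Mathlib

/-! ## Common definitions: actions, executions, MSCs, communication models,
communicating finite state machines, and global types. -/

/-- Actions: a send `p▷q!m` or a receive `p▷q?m`. -/
inductive Act (P M : Type) : Type where
  | snd (p q : P) (m : M)
  | rcv (p q : P) (m : M)
deriving DecidableEq

namespace Act
variable {P M : Type}

/-- The process executing an action: a send belongs to the sender,
a receive belongs to the receiver. -/
def proc : Act P M → P
  | .snd p _ _ => p
  | .rcv _ q _ => q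

end Act

/-- Raw executions: a word of actions together with a source function on positions. -/
structure Exec (P M : Type) : Type where
  w : List (Act P M)
  src : ℕ → ℕ

namespace Exec
variable {P M : Type}

def act? (e : Exec P M) (i : ℕ) : Option (Act P M) := e.w[i]?

def IsSend (e : Exec P M) (i : ℕ) : Prop := ∃ p q m, e.act? i = some (.snd p q m)

def IsRecv (e : Exec P M) (i : ℕ) : Prop := ∃ p q m, e.act? i = some (.rcv p q m)

/-- Well-formedness of an execution: each receive event `r` labelled `p▷q?m` has a
source send event `src r < r` labelled `p▷q!m`, and `src` is injective on receive events. -/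
def WF (e : Exec P M) : Prop :=
  (∀ i p q m, e.act? i = some (.rcv p q m) →
    e.src i < i ∧ e.act? (e.src i) = some (.snd p q m)) ∧
  (∀ i j, e.IsRecv i → e.IsRecv j → e.src i = e.src j → i = j)

/-- A send event is matched if it is the source of some receive event. -/
def Matched (e : Exec P M) (s : ℕ) : Prop := ∃ r, e.IsRecv r ∧ e.src r = s

def OrphanFree (e : Exec P M) : Prop := ∀ s, e.IsSend s → e.Matched s

/-- Prefix of executions: the word is a prefix and the source functions agree
on the receive events of the shorter one. -/
def IsPrefix (e₁ e₂ : Exec P M) : Prop :=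
  e₁.w <+: e₂.w ∧ ∀ i, e₁.IsRecv i → e₁.src i = e₂.src i

/-- Projection of an execution onto the actions of a process. -/
def proj (e : Exec P M) [DecidableEq P] (p : P) : List (Act P M) :=
  e.w.filter (fun a => decide (a.proc = p))

/-- The MSC event `(process, index within the process)` at a position of the word. -/
def evOf (e : Exec P M) [DecidableEq P] (i : ℕ) : Option (P × ℕ) :=
  (e.act? i).map
    (fun a => (a.proc, ((e.w.take i).filter (fun b => decide (b.proc = a.proc))).length))

/-- The position in the word of the `i`-th event of process `p`. -/
def posOf (e : Exec P M) [DecidableEq P] (ev : P × ℕ) : ℕ :=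
  ((List.range e.w.length).filter
    (fun k => decide ((e.act? k).map Act.proc = some ev.1))).getD ev.2 0

end Exec

/-- Raw MSCs: a word of actions per process, and a source function on events. -/
structure MSC (P M : Type) : Type where
  w : P → List (Act P M)
  src : P × ℕ → P × ℕ

namespace MSC
variable {P M : Type}

def act? (Mm : MSC P M) (ev : P × ℕ) : Option (Act P M) := (Mm.w ev.1)[ev.2]?

def IsSend (Mm : MSC P M) (ev : P × ℕ) : Prop := ∃ p q m, Mm.act? ev = some (.snd p q m)

def IsRecv (Mm : MSC P M) (ev : P × ℕ) : Prop := ∃ p q m, Mm.act? ev = some (.rcv p q m)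

/-- Well-formedness of an MSC. -/
def WF (Mm : MSC P M) : Prop :=
  (∀ p, ∀ a ∈ Mm.w p, a.proc = p) ∧
  (∀ ev p q m, Mm.act? ev = some (.rcv p q m) → Mm.act? (Mm.src ev) = some (.snd p q m)) ∧
  (∀ ev ev', Mm.IsRecv ev → Mm.IsRecv ev' → Mm.src ev = Mm.src ev' → ev = ev')

/-- Basic happens-before steps: process order and message order. -/
inductive hbBase (Mm : MSC P M) : P × ℕ → P × ℕ → Prop where
  | proc (p : P) (i j : ℕ) : i < j → j < (Mm.w p).length → hbBase Mm (p, i) (p, j)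
  | msg (ev : P × ℕ) : Mm.IsRecv ev → hbBase Mm (Mm.src ev) ev

/-- The happens-before relation: least transitive relation containing the basic steps. -/
def hb (Mm : MSC P M) : P × ℕ → P × ℕ → Prop := Relation.TransGen (hbBase Mm)

/-- Prefix of MSCs. -/
def IsPrefix (M₁ M₂ : MSC P M) : Prop :=
  (∀ p, M₁.w p <+: M₂.w p) ∧ ∀ ev, M₁.IsRecv ev → M₁.src ev = M₂.src ev

end MSC

/-- Prefix closure of a set of MSCs. -/
def prefSet {P M : Type} (X : Set (MSC P M)) : Set (MSC P M) :=
  {Mm | ∃ M' ∈ X, Mm.IsPrefix M'}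

/-- The MSC of an execution: project onto each process and lift the source function. -/
def Exec.toMSC {P M : Type} [DecidableEq P] (e : Exec P M) : MSC P M where
  w p := e.w.filter (fun a => decide (a.proc = p))
  src ev := (e.evOf (e.src (e.posOf ev))).getD ev

/-- The linearisations of an MSC, identified with the executions they induce. -/
def lin {P M : Type} [DecidableEq P] (Mm : MSC P M) : Set (Exec P M) :=
  {e | e.WF ∧ e.toMSC = Mm}

/-- The linearisations of an MSC lying in a communication model. -/
def linC {P M : Type} [DecidableEq P] (Com : Set (Exec P M)) (Mm : MSC P M) :
    Set (Exec P M) :=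
  lin Mm ∩ Com

/-- A communication model (a set of executions) is causally closed if whenever an MSC
has a linearisation in the model, all its linearisations are in the model. -/
def CausallyClosed {P M : Type} [DecidableEq P] (Com : Set (Exec P M)) : Prop :=
  ∀ Mm : MSC P M, (linC Com Mm).Nonempty → linC Com Mm = lin Mm

/-- The MSCs linearisable in a communication model. -/
def MSCModel {P M : Type} [DecidableEq P] (Com : Set (Exec P M)) : Set (MSC P M) :=
  {Mm | (linC Com Mm).Nonempty}

/-- The bag communication model: all executions. -/
def bag {P M : Type} : Set (Exec P M) := {e | e.WF}

/-- The synchronous communication model: every send is immediately followed by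
its matching receive. -/
def synch {P M : Type} : Set (Exec P M) :=
  {e | e.WF ∧ ∀ s, e.IsSend s → e.IsRecv (s + 1) ∧ e.src (s + 1) = s}

/-- The peer-to-peer communication model. -/
def p2p {P M : Type} : Set (Exec P M) :=
  {e | e.WF ∧ ∀ s₁ s₂ p q m₁ m₂,
    e.act? s₁ = some (.snd p q m₁) → e.act? s₂ = some (.snd p q m₂) → s₁ < s₂ →
    (¬ e.Matched s₂ ∨
      ∃ r₁ r₂, r₁ < r₂ ∧ e.IsRecv r₁ ∧ e.IsRecv r₂ ∧ e.src r₁ = s₁ ∧ e.src r₂ = s₂)}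

/-- Happens-before between positions of an execution, through its MSC. -/
def Exec.hbM {P M : Type} [DecidableEq P] (e : Exec P M) (i j : ℕ) : Prop :=
  ∃ ev₁ ev₂, e.evOf i = some ev₁ ∧ e.evOf j = some ev₂ ∧ e.toMSC.hb ev₁ ev₂

/-- The causally ordered communication model. -/
def causal {P M : Type} [DecidableEq P] : Set (Exec P M) :=
  {e | e.WF ∧ ∀ s₁ s₂ p₁ p₂ q m₁ m₂,
    e.act? s₁ = some (.snd p₁ q m₁) → e.act? s₂ = some (.snd p₂ q m₂) → e.hbM s₁ s₂ →
    (¬ e.Matched s₂ ∨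
      ∃ r₁ r₂, e.hbM r₁ r₂ ∧ e.IsRecv r₁ ∧ e.IsRecv r₂ ∧ e.src r₁ = s₁ ∧ e.src r₂ = s₂)}

/-- A communicating finite state machine: an NFA with ε-transitions
(over the actions of a process) with finitely many states. -/
structure CFSM (A : Type) : Type 1 where
  State : Type
  fin : Fintype State
  aut : εNFA A State

instance {A : Type} (c : CFSM A) : Fintype c.State := c.fin

/-- The machine obtained by making all states accepting. -/
def CFSM.up {A : Type} (c : CFSM A) : CFSM A :=
  ⟨c.State, c.fin, { c.aut with accept := Set.univ }⟩

/-- Making all states of all machines of a system accepting. -/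
def sysUp {P M : Type} (S : P → CFSM (Act P M)) : P → CFSM (Act P M) :=
  fun p => (S p).up

/-- `Exec(S, Com)`: the executions of a system of CFSMs in a communication model. -/
def ExecSys {P M : Type} [DecidableEq P] (S : P → CFSM (Act P M)) (Com : Set (Exec P M)) :
    Set (Exec P M) :=
  {e | e ∈ Com ∧ ∀ p, e.proj p ∈ (S p).aut.accepts}

/-- `MSC(S, Com)`: the MSCs of the executions of a system of CFSMs. -/
def MSCSys {P M : Type} [DecidableEq P] (S : P → CFSM (Act P M)) (Com : Set (Exec P M)) :
    Set (MSC P M) :=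
  Exec.toMSC '' ExecSys S Com

/-- A system is deadlock-free for `Com` if every execution of the system with all states
accepting is a prefix of an accepting execution of the system. -/
def DeadlockFree {P M : Type} [DecidableEq P] (S : P → CFSM (Act P M))
    (Com : Set (Exec P M)) : Prop :=
  ∀ e ∈ ExecSys (sysUp S) Com, ∃ e' ∈ ExecSys S Com, e.IsPrefix e'

/-- A system is orphan-free for `Com` if all its executions are orphan-free. -/
def SysOrphanFree {P M : Type} [DecidableEq P] (S : P → CFSM (Act P M))
    (Com : Set (Exec P M)) : Prop :=
  ∀ e ∈ ExecSys S Com, e.OrphanFree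

/-- An arrow `p→q:m` with `p ≠ q`. -/
def Arrow (P M : Type) : Type := {x : P × P × M // x.1 ≠ x.2.1}

namespace Arrow
variable {P M : Type}

def sender (a : Arrow P M) : P := a.1.1
def receiver (a : Arrow P M) : P := a.1.2.1
def msg (a : Arrow P M) : M := a.1.2.2
def sendAct (a : Arrow P M) : Act P M := .snd a.sender a.receiver a.msg
def recvAct (a : Arrow P M) : Act P M := .rcv a.sender a.receiver a.msg

/-- Two arrows commute when their pairs of processes are disjoint. -/
def Commutes (a b : Arrow P M) : Prop :=
  a.sender ≠ b.sender ∧ a.sender ≠ b.receiver ∧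
    a.receiver ≠ b.sender ∧ a.receiver ≠ b.receiver

instance [DecidableEq P] [Fintype P] [Fintype M] : Fintype (Arrow P M) :=
  Subtype.fintype _

end Arrow

/-- A global type: a deterministic finite (possibly partial) automaton over arrows. -/
structure GType (P M : Type) : Type 1 where
  State : Type
  fin : Fintype State
  step : State → Arrow P M → Option State
  start : State
  accept : Set State

instance {P M : Type} (G : GType P M) : Fintype G.State := G.fin

namespace GType
variable {P M : Type}

def evalFrom (G : GType P M) (s : Option G.State) (w : List (Arrow P M)) : Option G.State :=
  w.foldl (fun s a => s.bind (fun q => G.step q a)) s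

/-- The word language of a global type. -/
def lang (G : GType P M) : Set (List (Arrow P M)) :=
  {w | ∃ s, G.evalFrom (some G.start) w = some s ∧ s ∈ G.accept}

/-- The arrows labelling the outgoing transitions of a state. -/
def choices (G : GType P M) (s : G.State) : Set (Arrow P M) := {a | (G.step s a).isSome}

/-- Commutation-determinism: no two arrows available at a same state commute. -/
def CommDet (G : GType P M) : Prop :=
  ∀ s : G.State, ∀ a ∈ G.choices s, ∀ b ∈ G.choices s, ¬ a.Commutes b

/-- Sender-driven choice: all arrows available at a same state have the same sender. -/
def SenderDriven (G : GType P M) : Prop :=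
  ∀ s : G.State, ∀ a ∈ G.choices s, ∀ b ∈ G.choices s, a.sender = b.sender

end GType

/-- The synchronous execution coded by a sequence of arrows. -/
def execOfArrows {P M : Type} (w : List (Arrow P M)) : Exec P M where
  w := (w.map (fun a => [a.sendAct, a.recvAct])).flatten
  src := fun i => i - 1

/-- The MSC coded by a sequence of arrows. -/
def mscOfArrows {P M : Type} [DecidableEq P] (w : List (Arrow P M)) : MSC P M :=
  (execOfArrows w).toMSC

/-- The set of MSCs of sequences of arrows (MSCs linearisable in the synchronous model). -/
def MSCsynch (P M : Type) [DecidableEq P] : Set (MSC P M) :=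
  Set.range (mscOfArrows (P := P) (M := M))

/-- The existential MSC language of a global type. -/
def Lexists {P M : Type} [DecidableEq P] (G : GType P M) : Set (MSC P M) :=
  mscOfArrows '' G.lang

/-- The universal MSC language of a global type. -/
def Lforall {P M : Type} [DecidableEq P] (G : GType P M) : Set (MSC P M) :=
  {Mm | (∃ w, mscOfArrows w = Mm) ∧ ∀ w, mscOfArrows w = Mm → w ∈ G.lang}

/-- A global type is commutation-closed when its existential and universal MSC
languages coincide. -/
def GType.CommClosed {P M : Type} [DecidableEq P] (G : GType P M) : Prop :=
  Lexists G = Lforall G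

/-- The relabelling of an arrow for the projection onto process `p`. -/
def projLabel {P M : Type} [DecidableEq P] (p : P) (a : Arrow P M) : Option (Act P M) :=
  if a.sender = p then some a.sendAct
  else if a.receiver = p then some a.recvAct
  else none

/-- The projected system of CFSMs of a global type. -/
def projG {P M : Type} [DecidableEq P] (G : GType P M) : P → CFSM (Act P M) :=
  fun p =>
    ⟨G.State, G.fin,
      { step := fun s oa =>
          {s' | ∃ arr : Arrow P M, G.step s arr = some s' ∧ projLabel p arr = oa},
        start := {G.start},
        accept := G.accept }⟩

/-- `Exec(G, Com)`: the semantics of a global type in a communication model. -/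
def ExecG {P M : Type} [DecidableEq P] (G : GType P M) (Com : Set (Exec P M)) :
    Set (Exec P M) :=
  {e | ∃ Mm ∈ Lexists G, e ∈ linC Com Mm}

/-- Deadlock-free realisability of a global type in a communication model:
(CC) conformance and (DF) deadlock freedom of the projected system. -/
def DFRealisable {P M : Type} [DecidableEq P] (G : GType P M) (Com : Set (Exec P M)) : Prop :=
  ExecSys (projG G) Com = ExecG G Com ∧ DeadlockFree (projG G) Com

/-- The synchronous product of a system of CFSMs: an ε-NFA over arrows. -/
def syncProd {P M : Type} (S : P → CFSM (Act P M)) :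
    εNFA (Arrow P M) (∀ p, (S p).State) where
  step st oa :=
    match oa with
    | some a =>
        {st' | st' a.sender ∈ (S a.sender).aut.step (st a.sender) (some a.sendAct) ∧
               st' a.receiver ∈ (S a.receiver).aut.step (st a.receiver) (some a.recvAct) ∧
               ∀ r, r ≠ a.sender → r ≠ a.receiver → st' r = st r}
    | none =>
        {st' | ∃ p, st' p ∈ (S p).aut.step (st p) none ∧ ∀ r, r ≠ p → st' r = st r}
  start := {st | ∀ p, st p ∈ (S p).aut.start}
  accept := {st | ∀ p, st p ∈ (S p).aut.accept}

/-- `prod(S)`: the powerset determinisation of the synchronous product, a global type. -/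
noncomputable def prodG {P M : Type} [Fintype P] (S : P → CFSM (Act P M)) : GType P M :=
  let A := (syncProd S).toNFA.toDFA
  { State := Set (∀ p, (S p).State)
    fin := by
      haveI : Finite (∀ p, (S p).State) := inferInstance
      exact Fintype.ofFinite _
    step := fun s a => some (A.step s a)
    start := A.start
    accept := A.accept }

/-- The product `G₁ ⊗ G₂` of two global types (language intersection). -/
def prodGT {P M : Type} (G₁ G₂ : GType P M) : GType P M where
  State := G₁.State × G₂.State
  fin := inferInstance
  step s a := (G₁.step s.1 a).bind fun q₁ => (G₂.step s.2 a).map fun q₂ => (q₁, q₂)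
  start := (G₁.start, G₂.start)
  accept := {s | s.1 ∈ G₁.accept ∧ s.2 ∈ G₂.accept}

/-- The dual of a global type: complete it and swap accepting and non-accepting states. -/
def dualG {P M : Type} (G : GType P M) : GType P M where
  State := Option G.State
  fin := inferInstance
  step s a := some (s.bind fun q => G.step q a)
  start := some G.start
  accept := {s | ∀ q, s = some q → q ∉ G.accept}

/-- RSC executions: every receive immediately follows its source send. -/
def RSCexec {P M : Type} : Set (Exec P M) :=
  {e | e.WF ∧ ∀ r, e.IsRecv r → e.src r = r - 1}

/-- The MSCs admitting an RSC linearisation. -/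
def MSCrsc {P M : Type} [DecidableEq P] : Set (MSC P M) :=
  {Mm | ∃ e ∈ RSCexec (P := P) (M := M), e.toMSC = Mm}

/-- A set of MSCs is RegSC if some NFA over actions accepts exactly the RSC executions
whose MSC belongs to the set. -/
def RegSCset {P M : Type} [DecidableEq P] (X : Set (MSC P M)) : Prop :=
  ∃ (σ : Type) (_ : Fintype σ) (A : NFA (Act P M) σ),
    ∀ w : List (Act P M),
      w ∈ A.accepts ↔ ∃ e ∈ RSCexec (P := P) (M := M), e.w = w ∧ e.toMSC ∈ X

/-- A communication model is RegSC if the set of its RSC-linearisable MSCs is RegSC. -/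
def RegSCmodel {P M : Type} [DecidableEq P] (Com : Set (Exec P M)) : Prop :=
  RegSCset (MSCModel Com ∩ MSCrsc)

/-
For a well-formed execution `e`, the map `evOf` from positions to events of `e.toMSC` is a
bijection onto the events of the MSC which preserves labels, the source of every receive, the
order of the events of each process and happens-before. Hence the p2p and causal conditions on
`e` are equivalent to conditions on `e.toMSC` alone, and a model that is cut out of the
well-formed executions by a property of their MSC is causally closed.
-/

namespace List

variable {α : Type*} (Q : α → Bool)

theorem getElem?_filter_length_filter_take {l : List α} {i : ℕ} {a : α}
    (h : l[i]? = some a) (ha : Q a) :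
    (l.filter Q)[((l.take i).filter Q).length]? = some a := by
  obtain ⟨hi, rfl⟩ := getElem?_eq_some_iff.mp h
  have hsplit : l.filter Q = (l.take i).filter Q ++ l[i] :: (l.drop (i + 1)).filter Q := by
    rw [← filter_cons_of_pos ha, ← drop_eq_getElem_cons hi, ← filter_append, take_append_drop]
  simp [hsplit]

theorem exists_getElem?_of_getElem?_filter {l : List α} {k : ℕ} {a : α}
    (h : (l.filter Q)[k]? = some a) :
    ∃ i, l[i]? = some a ∧ ((l.take i).filter Q).length = k ∧ Q a := by
  induction l generalizing k with
  | nil => simp at h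
  | cons b l ih =>
    by_cases hb : Q b
    · rw [filter_cons_of_pos hb] at h
      cases k with
      | zero =>
        obtain rfl : b = a := by simpa using h
        exact ⟨0, by simp, by simp, hb⟩
      | succ k =>
        obtain ⟨i, h₁, h₂, h₃⟩ := ih (by simpa using h)
        exact ⟨i + 1, by simpa using h₁, by simp [hb, h₂], h₃⟩
    · rw [filter_cons_of_neg hb] at h
      obtain ⟨i, h₁, h₂, h₃⟩ := ih h
      exact ⟨i + 1, by simpa using h₁, by simp [hb, h₂], h₃⟩

end List

namespace MSC

variable {P M : Type}

def Matched (Mm : MSC P M) (ev : P × ℕ) : Prop := ∃ rv, Mm.IsRecv rv ∧ Mm.src rv = ev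

def IsP2P (Mm : MSC P M) : Prop :=
  ∀ i j p q m₁ m₂, Mm.act? (p, i) = some (.snd p q m₁) → Mm.act? (p, j) = some (.snd p q m₂) →
    i < j → ¬ Mm.Matched (p, j) ∨
      ∃ k l, k < l ∧ (Mm.IsRecv (q, k) ∧ Mm.src (q, k) = (p, i)) ∧
        (Mm.IsRecv (q, l) ∧ Mm.src (q, l) = (p, j))

def IsCausal (Mm : MSC P M) : Prop :=
  ∀ ev₁ ev₂ p₁ p₂ q m₁ m₂, Mm.act? ev₁ = some (.snd p₁ q m₁) →
    Mm.act? ev₂ = some (.snd p₂ q m₂) → Mm.hb ev₁ ev₂ → ¬ Mm.Matched ev₂ ∨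
      ∃ rv₁ rv₂, Mm.hb rv₁ rv₂ ∧ (Mm.IsRecv rv₁ ∧ Mm.src rv₁ = ev₁) ∧
        (Mm.IsRecv rv₂ ∧ Mm.src rv₂ = ev₂)

end MSC

namespace Exec

variable {P M : Type} {e : Exec P M} {i j r s : ℕ} {a : Act P M} {ev rv sv : P × ℕ}

theorem act?_eq_rcv_of_src_eq (hWF : e.WF) (hR : e.IsRecv r) (hsrc : e.src r = s)
    {p q : P} {m : M} (hs : e.act? s = some (.snd p q m)) : e.act? r = some (.rcv p q m) := by
  obtain ⟨p', q', m', hr⟩ := hR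
  have hsnd := (hWF.1 r p' q' m' hr).2
  rw [hsrc, hs] at hsnd
  cases hsnd
  exact hr

variable [DecidableEq P]

def procCount (e : Exec P M) (p : P) (i : ℕ) : ℕ :=
  ((e.w.take i).filter (fun b => decide (b.proc = p))).length

theorem evOf_of_act? (h : e.act? i = some a) :
    e.evOf i = some (a.proc, e.procCount a.proc i) := by
  simp [evOf, h, procCount]

theorem exists_act?_of_evOf {p : P} {k : ℕ} (h : e.evOf i = some (p, k)) :
    ∃ a, e.act? i = some a ∧ a.proc = p ∧ e.procCount p i = k := by
  obtain ⟨a, ha, hev⟩ := Option.map_eq_some_iff.mp h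
  obtain ⟨rfl, rfl⟩ := Prod.mk.inj hev
  exact ⟨a, ha, rfl, rfl⟩

theorem procCount_lt_procCount (h : e.act? i = some a) (hij : i < j) :
    e.procCount a.proc i < e.procCount a.proc j := by
  have hsucc : e.procCount a.proc (i + 1) = e.procCount a.proc i + 1 := by
    simp [procCount, List.take_add_one, show e.w[i]? = some a from h]
  have hmono : e.procCount a.proc (i + 1) ≤ e.procCount a.proc j :=
    ((List.take_prefix_take_left hij).filter _).length_le
  omega

theorem evOf_lt_iff {p : P} {k l : ℕ} (hi : e.evOf i = some (p, k))
    (hj : e.evOf j = some (p, l)) : k < l ↔ i < j := by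
  obtain ⟨a, ha, rfl, rfl⟩ := exists_act?_of_evOf hi
  obtain ⟨b, hb, hbp, rfl⟩ := exists_act?_of_evOf hj
  refine ⟨fun hkl => ?_, procCount_lt_procCount ha⟩
  rcases lt_trichotomy i j with h | rfl | h
  · exact h
  · exact absurd hkl (lt_irrefl _)
  · exact absurd (hbp ▸ procCount_lt_procCount hb h) hkl.not_gt

theorem evOf_inj (hi : e.evOf i = some ev) (hj : e.evOf j = some ev) : i = j := by
  have := evOf_lt_iff hi hj
  have := evOf_lt_iff hj hi
  omega

theorem length_filter_range_eq_procCount (p : P) (hi : i ≤ e.w.length) :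
    ((List.range i).filter fun k => decide ((e.act? k).map Act.proc = some p)).length =
      e.procCount p i := by
  induction i with
  | zero => simp [procCount]
  | succ i ih =>
    have ha : e.act? i = some e.w[i] := List.getElem?_eq_getElem (by omega)
    rw [List.range_succ, List.filter_append, List.length_append, ih (by omega)]
    simp only [procCount] at ih ⊢
    rw [List.take_add_one, show e.w[i]? = some e.w[i] from ha]
    by_cases hp : e.w[i].proc = p <;> simp only [ha, hp, Option.toList_some, List.filter_append,
      List.length_append, List.filter_singleton, Option.map_some, decide_true, decide_false,
      Option.some.injEq, cond_true, cond_false, List.length_singleton, List.length_nil]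

theorem posOf_eq_of_evOf (h : e.evOf i = some ev) : e.posOf ev = i := by
  obtain ⟨p, k⟩ := ev
  obtain ⟨a, ha, rfl, rfl⟩ := exists_act?_of_evOf h
  have hi : i < e.w.length := (List.getElem?_eq_some_iff.mp ha).1
  have hpos := List.getElem?_filter_length_filter_take
    (fun k => decide ((e.act? k).map Act.proc = some a.proc))
    (List.getElem?_range hi) (by simp [ha])
  rw [List.take_range, min_eq_left hi.le, length_filter_range_eq_procCount _ hi.le] at hpos
  rw [posOf, List.getD_eq_getElem?_getD, hpos]
  rfl

theorem toMSC_act?_eq (h : e.evOf i = some ev) : e.toMSC.act? ev = e.act? i := by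
  obtain ⟨p, k⟩ := ev
  obtain ⟨a, ha, rfl, rfl⟩ := exists_act?_of_evOf h
  rw [ha]
  exact List.getElem?_filter_length_filter_take _ ha (by simp)

theorem exists_evOf_of_toMSC_act? (h : e.toMSC.act? ev = some a) : ∃ i, e.evOf i = some ev := by
  obtain ⟨i, hi, hk, hp⟩ := List.exists_getElem?_of_getElem?_filter _ h
  refine ⟨i, ?_⟩
  rw [evOf_of_act? hi, of_decide_eq_true hp]
  exact congrArg _ (congrArg _ hk)

theorem evOf_src (hWF : e.WF) (hr : e.IsRecv i) (h : e.evOf i = some ev) :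
    e.evOf (e.src i) = some (e.toMSC.src ev) := by
  obtain ⟨p, q, m, hr⟩ := hr
  show _ = some ((e.evOf (e.src (e.posOf ev))).getD ev)
  rw [posOf_eq_of_evOf h, evOf_of_act? (hWF.1 i p q m hr).2]
  rfl

theorem exists_evOf_of_isRecv (h : e.IsRecv i) : ∃ ev, e.evOf i = some ev := by
  obtain ⟨p, q, m, h⟩ := h
  exact ⟨_, evOf_of_act? h⟩

theorem exists_evOf_of_toMSC_isRecv (h : e.toMSC.IsRecv ev) : ∃ i, e.evOf i = some ev := by
  obtain ⟨p, q, m, h⟩ := h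
  exact exists_evOf_of_toMSC_act? h

theorem isRecv_iff_toMSC_isRecv (h : e.evOf i = some ev) : e.IsRecv i ↔ e.toMSC.IsRecv ev := by
  simp only [IsRecv, MSC.IsRecv, toMSC_act?_eq h]

theorem isRecv_and_src_eq_iff (hWF : e.WF) (hr : e.evOf r = some rv) (hs : e.evOf s = some sv) :
    e.IsRecv r ∧ e.src r = s ↔ e.toMSC.IsRecv rv ∧ e.toMSC.src rv = sv := by
  rw [isRecv_iff_toMSC_isRecv hr]
  refine and_congr_right fun hR => ?_
  have hsrc := evOf_src hWF ((isRecv_iff_toMSC_isRecv hr).2 hR) hr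
  constructor
  · rintro rfl
    exact Option.some_injective _ (hsrc.symm.trans hs)
  · rintro rfl
    exact evOf_inj hsrc hs

theorem matched_iff_toMSC_matched (hWF : e.WF) (hs : e.evOf s = some sv) :
    e.Matched s ↔ e.toMSC.Matched sv := by
  constructor
  · rintro ⟨r, hR, hsrc⟩
    obtain ⟨rv, hr⟩ := exists_evOf_of_isRecv hR
    exact ⟨rv, (isRecv_and_src_eq_iff hWF hr hs).1 ⟨hR, hsrc⟩⟩
  · rintro ⟨rv, hR, hsrc⟩
    obtain ⟨r, hr⟩ := exists_evOf_of_toMSC_isRecv hR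
    exact ⟨r, (isRecv_and_src_eq_iff hWF hr hs).2 ⟨hR, hsrc⟩⟩

theorem hbM_iff (hi : e.evOf i = some ev) (hj : e.evOf j = some rv) :
    e.hbM i j ↔ e.toMSC.hb ev rv := by
  simp [hbM, hi, hj]

theorem mem_p2p_iff (hWF : e.WF) : e ∈ p2p ↔ e.toMSC.IsP2P := by
  refine (and_iff_right hWF).trans ⟨fun hc i j p q m₁ m₂ h₁ h₂ hij => ?_,
    fun hc s₁ s₂ p q m₁ m₂ h₁ h₂ hlt => ?_⟩
  · obtain ⟨s₁, hs₁⟩ := exists_evOf_of_toMSC_act? h₁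
    obtain ⟨s₂, hs₂⟩ := exists_evOf_of_toMSC_act? h₂
    rw [toMSC_act?_eq hs₁] at h₁
    rw [toMSC_act?_eq hs₂] at h₂
    refine (hc s₁ s₂ p q m₁ m₂ h₁ h₂ ((evOf_lt_iff hs₁ hs₂).1 hij)).imp
      (mt (matched_iff_toMSC_matched hWF hs₂).2) ?_
    rintro ⟨r₁, r₂, hlt, hR₁, hR₂, hsrc₁, hsrc₂⟩
    have hr₁ := evOf_of_act? (act?_eq_rcv_of_src_eq hWF hR₁ hsrc₁ h₁)
    have hr₂ := evOf_of_act? (act?_eq_rcv_of_src_eq hWF hR₂ hsrc₂ h₂)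
    exact ⟨_, _, (evOf_lt_iff hr₁ hr₂).2 hlt, (isRecv_and_src_eq_iff hWF hr₁ hs₁).1 ⟨hR₁, hsrc₁⟩,
      (isRecv_and_src_eq_iff hWF hr₂ hs₂).1 ⟨hR₂, hsrc₂⟩⟩
  · have hs₁ := evOf_of_act? h₁
    have hs₂ := evOf_of_act? h₂
    rw [← toMSC_act?_eq hs₁] at h₁
    rw [← toMSC_act?_eq hs₂] at h₂
    refine (hc _ _ p q m₁ m₂ h₁ h₂ ((evOf_lt_iff hs₁ hs₂).2 hlt)).imp
      (mt (matched_iff_toMSC_matched hWF hs₂).1) ?_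
    rintro ⟨k, l, hkl, hk, hl⟩
    obtain ⟨r₁, hr₁⟩ := exists_evOf_of_toMSC_isRecv hk.1
    obtain ⟨r₂, hr₂⟩ := exists_evOf_of_toMSC_isRecv hl.1
    obtain ⟨hR₁, hsrc₁⟩ := (isRecv_and_src_eq_iff hWF hr₁ hs₁).2 hk
    obtain ⟨hR₂, hsrc₂⟩ := (isRecv_and_src_eq_iff hWF hr₂ hs₂).2 hl
    exact ⟨r₁, r₂, (evOf_lt_iff hr₁ hr₂).1 hkl, hR₁, hR₂, hsrc₁, hsrc₂⟩

theorem mem_causal_iff (hWF : e.WF) : e ∈ causal ↔ e.toMSC.IsCausal := by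
  refine (and_iff_right hWF).trans ⟨fun hc ev₁ ev₂ p₁ p₂ q m₁ m₂ h₁ h₂ hhb => ?_,
    fun hc s₁ s₂ p₁ p₂ q m₁ m₂ h₁ h₂ hhb => ?_⟩
  · obtain ⟨s₁, hs₁⟩ := exists_evOf_of_toMSC_act? h₁
    obtain ⟨s₂, hs₂⟩ := exists_evOf_of_toMSC_act? h₂
    rw [toMSC_act?_eq hs₁] at h₁
    rw [toMSC_act?_eq hs₂] at h₂
    refine (hc s₁ s₂ p₁ p₂ q m₁ m₂ h₁ h₂ ((hbM_iff hs₁ hs₂).2 hhb)).imp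
      (mt (matched_iff_toMSC_matched hWF hs₂).2) ?_
    rintro ⟨r₁, r₂, ⟨rv₁, rv₂, hr₁, hr₂, hhb'⟩, hR₁, hR₂, hsrc₁, hsrc₂⟩
    exact ⟨rv₁, rv₂, hhb', (isRecv_and_src_eq_iff hWF hr₁ hs₁).1 ⟨hR₁, hsrc₁⟩,
      (isRecv_and_src_eq_iff hWF hr₂ hs₂).1 ⟨hR₂, hsrc₂⟩⟩
  · obtain ⟨ev₁, ev₂, hs₁, hs₂, hhb⟩ := hhb
    rw [← toMSC_act?_eq hs₁] at h₁
    rw [← toMSC_act?_eq hs₂] at h₂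
    refine (hc ev₁ ev₂ p₁ p₂ q m₁ m₂ h₁ h₂ hhb).imp
      (mt (matched_iff_toMSC_matched hWF hs₂).1) ?_
    rintro ⟨rv₁, rv₂, hhb', hk, hl⟩
    obtain ⟨r₁, hr₁⟩ := exists_evOf_of_toMSC_isRecv hk.1
    obtain ⟨r₂, hr₂⟩ := exists_evOf_of_toMSC_isRecv hl.1
    obtain ⟨hR₁, hsrc₁⟩ := (isRecv_and_src_eq_iff hWF hr₁ hs₁).2 hk
    obtain ⟨hR₂, hsrc₂⟩ := (isRecv_and_src_eq_iff hWF hr₂ hs₂).2 hl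
    exact ⟨r₁, r₂, (hbM_iff hr₁ hr₂).2 hhb', hR₁, hR₂, hsrc₁, hsrc₂⟩

end Exec

theorem causallyClosed_of_mem_iff {P M : Type} [DecidableEq P] {Com : Set (Exec P M)}
    (Φ : MSC P M → Prop) (h : ∀ e : Exec P M, e.WF → (e ∈ Com ↔ Φ e.toMSC)) :
    CausallyClosed Com := by
  rintro _ ⟨e₀, ⟨hWF₀, rfl⟩, he₀⟩
  refine Set.Subset.antisymm Set.inter_subset_left fun e ⟨hWF, hM⟩ => ⟨⟨hWF, hM⟩, ?_⟩
  exact (h e hWF).2 (hM ▸ (h e₀ hWF₀).1 he₀)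

theorem stmt1_general (P Mg : Type) [DecidableEq P] :
    CausallyClosed (p2p : Set (Exec P Mg)) ∧
    CausallyClosed (causal : Set (Exec P Mg)) ∧
    CausallyClosed (bag : Set (Exec P Mg)) :=
  ⟨causallyClosed_of_mem_iff MSC.IsP2P fun _ ↦ Exec.mem_p2p_iff,
    causallyClosed_of_mem_iff MSC.IsCausal fun _ ↦ Exec.mem_causal_iff,
    causallyClosed_of_mem_iff (fun _ ↦ True) fun _ hWF ↦ iff_of_true hWF trivial⟩

/-- the communication models `p2p`, `causal` and `bag` are causally-closed. -/
theorem stmt1 (P Mg : Type) [Fintype P] [DecidableEq P] [Fintype Mg] [DecidableEq Mg] :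
    CausallyClosed (p2p : Set (Exec P Mg)) ∧
    CausallyClosed (causal : Set (Exec P Mg)) ∧
    CausallyClosed (bag : Set (Exec P Mg)) :=
  stmt1_general P Mg
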